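/- For every natural number k and every real number x, Σ_{n≥0} S_D(n,k) · x^n / n! = (1/(2^k · k!)) · (e^x - x) · (e^(2x) - 1)^k, where the series on the left converges. -/
import Mathlib

open Finset


/-- The classical Stirling numbers of the second kind, defined by the recurrence
`S(n,k) = S(n-1,k-1) + k·S(n-1,k)` with `S(0,k) = δ_{0,k}`. -/
def stirling2 : ℕ → ℕ → ℕ
  | 0, 0 => 1
  | 0, _ + 1 => 0
  | _ + 1, 0 => 0
  | n + 1, k + 1 => stirling2 n k + (k + 1) * stirling2 n (k + 1)

/-- The type `B` Stirling numbers of the second kind, defined by the recurrence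
`S_B(n,k) = S_B(n-1,k-1) + (2k+1)·S_B(n-1,k)` with `S_B(0,k) = δ_{0,k}`. -/
def stirlingB : ℕ → ℕ → ℕ
  | 0, 0 => 1
  | 0, _ + 1 => 0
  | n + 1, 0 => stirlingB n 0
  | n + 1, k + 1 => stirlingB n k + (2 * (k + 1) + 1) * stirlingB n (k + 1)

/-- The type `B` Bell numbers: `B(n) = Σ_{k=0}^{n} S_B(n,k)`. -/
def bellB (n : ℕ) : ℕ := ∑ k ∈ Finset.range (n + 1), stirlingB n k

/-- The type `D` Stirling numbers of the second kind:
`S_D(n,k) = S_B(n,k) - n·2^(n-1-k)·S(n-1,k)` for `n ≥ 1` and `0 ≤ k ≤ n-1`,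
with `S_D(n,n) = 1` and `S_D(0,k) = δ_{0,k}`. -/
def stirlingD (n k : ℕ) : ℤ :=
  if n = 0 then (if k = 0 then 1 else 0)
  else if k = n then 1
  else if k ≤ n - 1 then
    (stirlingB n k : ℤ) - (n : ℤ) * 2 ^ (n - 1 - k) * (stirling2 (n - 1) k : ℤ)
  else 0

/-- The type `D` Bell numbers: `D(n) = Σ_{k=0}^{n} S_D(n,k)`. -/
def bellD (n : ℕ) : ℤ := ∑ k ∈ Finset.range (n + 1), stirlingD n k

lemma stirling2_eq_zero : ∀ n k, n < k → stirling2 n k = 0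
  | 0, 0, h => by omega
  | 0, k + 1, _ => rfl
  | n + 1, 0, h => by omega
  | n + 1, k + 1, h => by
    rw [stirling2, stirling2_eq_zero n k (by omega), stirling2_eq_zero n (k+1) (by omega)]; ring

lemma stirlingB_zero : ∀ n, stirlingB n 0 = 1
  | 0 => rfl
  | n + 1 => by rw [stirlingB, stirlingB_zero n]

lemma stirlingB_eq_zero : ∀ n k, n < k → stirlingB n k = 0
  | 0, 0, h => by omega
  | 0, k + 1, _ => rfl
  | n + 1, 0, h => by omega
  | n + 1, k + 1, h => by
    rw [stirlingB, stirlingB_eq_zero n k (by omega), stirlingB_eq_zero n (k+1) (by omega)]; ring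

lemma stirlingB_self : ∀ n, stirlingB n n = 1
  | 0 => rfl
  | n + 1 => by
    rw [stirlingB, stirlingB_self n, stirlingB_eq_zero n (n+1) (by omega)]; ring

lemma alt_base (k : ℕ) :
    ∑ j ∈ range (k + 1), (-1 : ℤ) ^ (k + j) * (k.choose j) = if k = 0 then 1 else 0 := by
  have h := Int.alternating_sum_range_choose (n := k)
  calc ∑ j ∈ range (k + 1), (-1 : ℤ) ^ (k + j) * (k.choose j)
      = (-1) ^ k * ∑ j ∈ range (k + 1), (-1 : ℤ) ^ j * (k.choose j) := by
        rw [mul_sum]; exact sum_congr rfl fun j _ => by rw [pow_add]; ring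
    _ = if k = 0 then 1 else 0 := by
        rw [h]; split <;> simp_all

lemma stirling2_formula : ∀ (n k : ℕ), (k.factorial : ℤ) * stirling2 n k
    = ∑ j ∈ range (k + 1), (-1 : ℤ) ^ (k + j) * (k.choose j) * (j : ℤ) ^ n := by
  intro n
  induction n with
  | zero =>
    intro k
    simp only [pow_zero, mul_one]
    rw [alt_base]
    cases k with
    | zero => simp [stirling2]
    | succ k => simp [stirling2]
  | succ n ih =>
    intro k
    cases k with
    | zero =>
      simp [stirling2]
    | succ k =>
      have key : ∑ j ∈ range (k + 2), (-1 : ℤ) ^ (k + 1 + j) * ((k+1).choose j) * (j : ℤ) ^ (n+1)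
          = (k + 1 : ℤ) * ∑ j ∈ range (k + 1), (-1 : ℤ) ^ (k + j) * (k.choose j) * (j : ℤ) ^ n
          + (k + 1 : ℤ) * ∑ j ∈ range (k + 2), (-1 : ℤ) ^ (k + 1 + j) * ((k+1).choose j) * (j : ℤ) ^ n := by
        have hext : ∑ j ∈ range (k + 1), (-1 : ℤ) ^ (k + j) * (k.choose j) * (j : ℤ) ^ n
            = ∑ j ∈ range (k + 2), (-1 : ℤ) ^ (k + j) * (k.choose j) * (j : ℤ) ^ n := by
          refine sum_subset (range_subset_range.mpr (by omega)) fun j hj hj' => ?_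
          have : j = k + 1 := by simp at hj hj'; omega
          subst this; simp [Nat.choose_succ_self]
        rw [hext, mul_sum, mul_sum, ← sum_add_distrib]
        refine sum_congr rfl fun j _ => ?_
        cases j with
        | zero =>
          have hs : (-1 : ℤ) ^ (k + 1 + 0) = -(-1 : ℤ) ^ (k + 0) := by
            rw [show k + 1 + 0 = (k + 0) + 1 by omega, pow_succ]; ring
          rw [hs]; simp only [Nat.choose_zero_right, Nat.cast_one]; push_cast; ring
        | succ j =>
          have hmul : ((j : ℤ) + 1) * ((k+1).choose (j+1) : ℤ) = ((k : ℤ) + 1) * (k.choose j : ℤ) := by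
            have h2 : ((k+1) * k.choose j : ℤ) = ((k+1).choose (j+1) * (j+1) : ℤ) :=
              mod_cast congrArg (Nat.cast : ℕ → ℤ) (Nat.add_one_mul_choose_eq k j)
            push_cast at h2 ⊢; linarith
          have hpas : ((k+1).choose (j+1) : ℤ) = (k.choose j : ℤ) + (k.choose (j+1) : ℤ) := by
            rw [← Nat.cast_add, ← Nat.choose_succ_succ]
          have hsign : (-1 : ℤ) ^ (k + (j + 1)) = -(-1 : ℤ) ^ (k + 1 + (j + 1)) := by
            rw [show k + 1 + (j + 1) = (k + (j+1)) + 1 by omega, pow_succ]; ring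
          rw [hsign]
          push_cast
          linear_combination ((-1:ℤ)^(k+1+(j+1)) * ((j:ℤ)+1)^n) * hmul
            - ((k:ℤ)+1) * ((-1:ℤ)^(k+1+(j+1)) * ((j:ℤ)+1)^n) * hpas
      rw [key, ← ih k, ← ih (k+1), stirling2]
      push_cast [Nat.factorial_succ]
      ring

lemma stirlingB_formula : ∀ (n k : ℕ), ((2:ℤ) ^ k * k.factorial) * stirlingB n k
    = ∑ j ∈ range (k + 1), (-1 : ℤ) ^ (k + j) * (k.choose j) * (2 * (j : ℤ) + 1) ^ n := by
  intro n
  induction n with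
  | zero =>
    intro k
    simp only [pow_zero, mul_one]
    rw [alt_base]
    cases k with
    | zero => simp [stirlingB]
    | succ k => simp [stirlingB]
  | succ n ih =>
    intro k
    cases k with
    | zero => simp [stirlingB_zero]
    | succ k =>
      have key : ∑ j ∈ range (k + 2), (-1 : ℤ) ^ (k + 1 + j) * ((k+1).choose j) * (2 * (j : ℤ) + 1) ^ (n+1)
          = 2 * (k + 1 : ℤ) * ∑ j ∈ range (k + 1), (-1 : ℤ) ^ (k + j) * (k.choose j) * (2 * (j : ℤ) + 1) ^ n
          + (2 * (k + 1 : ℤ) + 1) * ∑ j ∈ range (k + 2), (-1 : ℤ) ^ (k + 1 + j) * ((k+1).choose j) * (2 * (j : ℤ) + 1) ^ n := by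
        have hext : ∑ j ∈ range (k + 1), (-1 : ℤ) ^ (k + j) * (k.choose j) * (2 * (j : ℤ) + 1) ^ n
            = ∑ j ∈ range (k + 2), (-1 : ℤ) ^ (k + j) * (k.choose j) * (2 * (j : ℤ) + 1) ^ n := by
          refine sum_subset (range_subset_range.mpr (by omega)) fun j hj hj' => ?_
          have : j = k + 1 := by simp at hj hj'; omega
          subst this; simp [Nat.choose_succ_self]
        rw [hext, mul_sum, mul_sum, ← sum_add_distrib]
        refine sum_congr rfl fun j hj => ?_
        have hjle : j ≤ k + 1 := by simp at hj; omega
        have hB : ((k : ℤ) + 1) * (k.choose j) = ((k+1).choose j) * ((k : ℤ) + 1 - j) := by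
          have h2 : ((k.choose j * (k+1) : ℕ) : ℤ) = (((k+1).choose j * (k + 1 - j) : ℕ) : ℤ) :=
            congrArg (Nat.cast : ℕ → ℤ) (Nat.choose_mul_succ_eq k j)
          push_cast [Nat.cast_sub hjle] at h2
          linarith
        have hsign : (-1 : ℤ) ^ (k + j) = -(-1 : ℤ) ^ (k + 1 + j) := by
          rw [show k + 1 + j = (k + j) + 1 by omega, pow_succ]; ring
        rw [hsign]
        linear_combination (2 * (-1:ℤ)^(k+1+j) * (2*(j:ℤ)+1)^n) * hB
      rw [key, ← ih k, ← ih (k+1), stirlingB]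
      push_cast [Nat.factorial_succ]
      ring

lemma stirling2_pow2_formula (n k : ℕ) : ((2:ℤ) ^ k * k.factorial) * (2 ^ (n - k) * stirling2 n k)
    = ∑ j ∈ range (k + 1), (-1 : ℤ) ^ (k + j) * (k.choose j) * (2 * (j : ℤ)) ^ n := by
  have hr : ∑ j ∈ range (k + 1), (-1 : ℤ) ^ (k + j) * (k.choose j) * (2 * (j : ℤ)) ^ n
      = 2 ^ n * ((k.factorial : ℤ) * stirling2 n k) := by
    rw [stirling2_formula n k, mul_sum]
    exact sum_congr rfl fun j _ => by rw [mul_pow]; ring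
  rw [hr]
  by_cases h : k ≤ n
  · rw [show (2:ℤ)^k * (k.factorial : ℤ) * (2 ^ (n-k) * stirling2 n k)
        = (2^k * 2^(n-k)) * ((k.factorial : ℤ) * stirling2 n k) by ring, ← pow_add,
      Nat.add_sub_cancel' h]
  · rw [stirling2_eq_zero n k (by omega)]
    simp

lemma stirlingD_eq (n k : ℕ) : stirlingD n k
    = (stirlingB n k : ℤ) - (n : ℤ) * 2 ^ (n - 1 - k) * (stirling2 (n - 1) k : ℤ) := by
  unfold stirlingD
  by_cases hn : n = 0
  · subst hn
    cases k <;> simp [stirlingB]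
  · rw [if_neg hn]
    by_cases hk : k = n
    · subst hk
      rw [if_pos rfl, stirlingB_self, stirling2_eq_zero (k-1) k (by omega)]
      simp
    · rw [if_neg hk]
      by_cases hk2 : k ≤ n - 1
      · rw [if_pos hk2]
      · rw [if_neg hk2, stirlingB_eq_zero n k (by omega), stirling2_eq_zero (n-1) k (by omega)]
        simp

lemma exp_tsum (y : ℝ) : ∑' n : ℕ, y ^ n / (n.factorial : ℝ) = Real.exp y := by
  rw [Real.exp_eq_exp_ℝ, NormedSpace.exp_eq_tsum_div]

lemma bin_sum (k : ℕ) (y : ℝ) :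
    ∑ j ∈ range (k + 1), (-1 : ℝ) ^ (k + j) * (k.choose j) * y ^ j = (y - 1) ^ k := by
  rw [sub_eq_add_neg, add_pow]
  refine sum_congr rfl fun j hj => ?_
  have hjk : j ≤ k := by simp at hj; omega
  have : (-1 : ℝ) ^ (k + j) = (-1 : ℝ) ^ (k - j) := by
    rw [show k + j = (k - j) + 2 * j by omega, pow_add, pow_mul]
    norm_num
  rw [this]; ring

lemma sum_exp_engine (k : ℕ) (x : ℝ) (w : ℕ → ℝ) :
    Summable (fun n : ℕ => (∑ j ∈ range (k+1), (-1:ℝ)^(k+j) * (k.choose j) * (w j)^n) * x^n / n.factorial) ∧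
    ∑' n : ℕ, (∑ j ∈ range (k+1), (-1:ℝ)^(k+j) * (k.choose j) * (w j)^n) * x^n / n.factorial
      = ∑ j ∈ range (k+1), (-1:ℝ)^(k+j) * (k.choose j) * Real.exp (w j * x) := by
  have hpt : ∀ n : ℕ, (∑ j ∈ range (k+1), (-1:ℝ)^(k+j) * (k.choose j) * (w j)^n) * x^n / n.factorial
      = ∑ j ∈ range (k+1), ((-1:ℝ)^(k+j) * (k.choose j)) * ((w j * x)^n / n.factorial) := by
    intro n
    rw [sum_mul, sum_div]
    exact sum_congr rfl fun j _ => by rw [mul_pow]; ring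
  have hsj : ∀ j : ℕ, Summable (fun n : ℕ => ((-1:ℝ)^(k+j) * (k.choose j)) * ((w j * x)^n / n.factorial)) :=
    fun j => (Real.summable_pow_div_factorial (w j * x)).mul_left _
  have hsum : Summable (fun n : ℕ => ∑ j ∈ range (k+1), ((-1:ℝ)^(k+j) * (k.choose j)) * ((w j * x)^n / n.factorial)) :=
    summable_sum fun j _ => hsj j
  refine ⟨hsum.congr fun n => (hpt n).symm, ?_⟩
  rw [tsum_congr hpt, Summable.tsum_finsetSum fun j _ => hsj j]
  exact sum_congr rfl fun j _ => by rw [tsum_mul_left, exp_tsum]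

lemma partA (k : ℕ) (x : ℝ) :
    Summable (fun n : ℕ => (stirlingB n k : ℝ) * x^n / n.factorial) ∧
    ∑' n : ℕ, (stirlingB n k : ℝ) * x^n / n.factorial
      = (1 / (2^k * (k.factorial : ℝ))) * Real.exp x * (Real.exp (2*x) - 1)^k := by
  have hc : ((2:ℝ)^k * k.factorial) ≠ 0 := by positivity
  have hpt : ∀ n : ℕ, (stirlingB n k : ℝ) * x^n / n.factorial
      = (1 / (2^k * (k.factorial : ℝ)))
        * ((∑ j ∈ range (k+1), (-1:ℝ)^(k+j) * (k.choose j) * (2*(j:ℝ)+1)^n) * x^n / n.factorial) := by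
    intro n
    have h := congrArg (fun z : ℤ => (z : ℝ)) (stirlingB_formula n k)
    push_cast at h
    have h2 : (stirlingB n k : ℝ)
        = (1 / (2^k * (k.factorial : ℝ))) * ∑ j ∈ range (k+1), (-1:ℝ)^(k+j) * (k.choose j) * (2*(j:ℝ)+1)^n := by
      field_simp
      linear_combination h
    rw [h2]; ring
  have he := sum_exp_engine k x (fun j => 2*(j:ℝ)+1)
  refine ⟨(he.1.mul_left _).congr fun n => (hpt n).symm, ?_⟩
  rw [tsum_congr hpt, tsum_mul_left, he.2]
  have hterm : ∀ j ∈ range (k+1), (-1:ℝ)^(k+j) * (k.choose j) * Real.exp ((2*(j:ℝ)+1) * x)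
      = Real.exp x * ((-1:ℝ)^(k+j) * (k.choose j) * (Real.exp (2*x))^j) := by
    intro j _
    rw [show (2*(j:ℝ)+1) * x = x + (j:ℕ) * (2*x) by push_cast; ring, Real.exp_add,
      Real.exp_nat_mul]
    ring
  rw [sum_congr rfl hterm, ← mul_sum, bin_sum k (Real.exp (2*x))]
  ring

lemma partB' (k : ℕ) (x : ℝ) :
    Summable (fun n : ℕ => ((2:ℝ)^(n-k) * (stirling2 n k : ℝ)) * x^n / n.factorial) ∧
    ∑' n : ℕ, ((2:ℝ)^(n-k) * (stirling2 n k : ℝ)) * x^n / n.factorial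
      = (1 / (2^k * (k.factorial : ℝ))) * (Real.exp (2*x) - 1)^k := by
  have hc : ((2:ℝ)^k * k.factorial) ≠ 0 := by positivity
  have hpt : ∀ n : ℕ, ((2:ℝ)^(n-k) * (stirling2 n k : ℝ)) * x^n / n.factorial
      = (1 / (2^k * (k.factorial : ℝ)))
        * ((∑ j ∈ range (k+1), (-1:ℝ)^(k+j) * (k.choose j) * (2*(j:ℝ))^n) * x^n / n.factorial) := by
    intro n
    have h := congrArg (fun z : ℤ => (z : ℝ)) (stirling2_pow2_formula n k)
    push_cast at h
    have h2 : (2:ℝ)^(n-k) * (stirling2 n k : ℝ)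
        = (1 / (2^k * (k.factorial : ℝ))) * ∑ j ∈ range (k+1), (-1:ℝ)^(k+j) * (k.choose j) * (2*(j:ℝ))^n := by
      field_simp
      linear_combination h
    rw [h2]; ring
  have he := sum_exp_engine k x (fun j => 2*(j:ℝ))
  refine ⟨(he.1.mul_left _).congr fun n => (hpt n).symm, ?_⟩
  rw [tsum_congr hpt, tsum_mul_left, he.2]
  have hterm : ∀ j ∈ range (k+1), (-1:ℝ)^(k+j) * (k.choose j) * Real.exp ((2*(j:ℝ)) * x)
      = (-1:ℝ)^(k+j) * (k.choose j) * (Real.exp (2*x))^j := by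
    intro j _
    rw [show (2*(j:ℝ)) * x = (j:ℕ) * (2*x) by push_cast; ring, Real.exp_nat_mul]
  rw [sum_congr rfl hterm, bin_sum k (Real.exp (2*x))]

lemma partB (k : ℕ) (x : ℝ) :
    Summable (fun n : ℕ => ((n:ℝ) * 2^(n-1-k) * (stirling2 (n-1) k : ℝ)) * x^n / n.factorial) ∧
    ∑' n : ℕ, ((n:ℝ) * 2^(n-1-k) * (stirling2 (n-1) k : ℝ)) * x^n / n.factorial
      = (1 / (2^k * (k.factorial : ℝ))) * x * (Real.exp (2*x) - 1)^k := by
  have hb := partB' k x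
  have hsh : ∀ n : ℕ, (((n+1 : ℕ):ℝ) * 2^((n+1)-1-k) * (stirling2 ((n+1)-1) k : ℝ)) * x^(n+1) / ((n+1).factorial : ℝ)
      = x * (((2:ℝ)^(n-k) * (stirling2 n k : ℝ)) * x^n / n.factorial) := by
    intro n
    simp only [Nat.add_sub_cancel]
    have hfac : (((n+1).factorial : ℝ)) = ((n:ℝ)+1) * n.factorial := by
      rw [Nat.factorial_succ]; push_cast; ring
    have hnf : (n.factorial : ℝ) ≠ 0 := by positivity
    have hn1 : ((n:ℝ)+1) ≠ 0 := by positivity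
    rw [hfac]
    push_cast
    field_simp
    ring
  have hshift : Summable (fun n : ℕ =>
      ((((n+1 : ℕ)):ℝ) * 2^((n+1)-1-k) * (stirling2 ((n+1)-1) k : ℝ)) * x^(n+1) / ((n+1).factorial : ℝ)) :=
    (hb.1.mul_left x).congr fun n => (hsh n).symm
  have hS : Summable (fun n : ℕ => ((n:ℝ) * 2^(n-1-k) * (stirling2 (n-1) k : ℝ)) * x^n / n.factorial) :=
    (summable_nat_add_iff 1).mp hshift
  refine ⟨hS, ?_⟩
  rw [Summable.tsum_eq_zero_add hS]
  simp only [Nat.cast_zero, zero_mul, mul_zero, zero_div, zero_add]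
  rw [tsum_congr hsh, tsum_mul_left, hb.2]
  ring

/-- `Σ_{n≥0} S_D(n,k)·x^n/n! = (1/(2^k·k!))·(e^x - x)·(e^(2x) - 1)^k`,
the series converging. -/
theorem stirlingD_egf (k : ℕ) (x : ℝ) :
    Summable (fun n : ℕ => (stirlingD n k : ℝ) * x ^ n / (n.factorial : ℝ)) ∧
    ∑' n : ℕ, (stirlingD n k : ℝ) * x ^ n / (n.factorial : ℝ)
      = (1 / (2 ^ k * (k.factorial : ℝ))) * (Real.exp x - x) * (Real.exp (2 * x) - 1) ^ k := by
  have hA := partA k x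
  have hB := partB k x
  have hpt : ∀ n : ℕ, (stirlingD n k : ℝ) * x ^ n / (n.factorial : ℝ)
      = (stirlingB n k : ℝ) * x^n / n.factorial
        - ((n:ℝ) * 2^(n-1-k) * (stirling2 (n-1) k : ℝ)) * x^n / n.factorial := by
    intro n
    have h := congrArg (fun z : ℤ => (z : ℝ)) (stirlingD_eq n k)
    push_cast at h
    rw [h]
    ring
  refine ⟨(hA.1.sub hB.1).congr fun n => (hpt n).symm, ?_⟩
  rw [tsum_congr hpt, Summable.tsum_sub hA.1 hB.1, hA.2, hB.2]
  ring
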